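/- Dirac confluence criterion: if for every element a of A and distributions E, F with E ⇐_P* [(1,a)] ⇒_P* F there exists C with E ↠* C ↞* F, then the PARS is distribution confluent (↠ = ⇒_P ∪ ≈ is confluent). -/

import Mathlib

open Relation
open scoped NNReal

abbrev PDist (A : Type) := List (ℝ≥0 × A)

namespace PPARS

variable {A X : Type}

/-- Total weight of a list distribution. -/
def weight (D : PDist A) : ℝ≥0 := (D.map Prod.fst).sum

/-- Scale every weight of a distribution by `α`. -/
def scale (α : ℝ≥0) (D : PDist A) : PDist A := D.map (fun pa => (α * pa.1, pa.2))

open Classical in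
/-- Total weight that `D` assigns to the element `a`. -/
noncomputable def wt (D : PDist A) (a : A) : ℝ≥0 :=
  (D.map (fun pa => if pa.2 = a then pa.1 else 0)).sum

/-- The Flip rule, closed under list contexts. -/
inductive FlipS : PDist A → PDist A → Prop
  | mk (E₁ E₂ : PDist A) (p q : ℝ≥0) (a b : A) :
      FlipS (E₁ ++ [(p,a),(q,b)] ++ E₂) (E₁ ++ [(q,b),(p,a)] ++ E₂)

/-- The Join rule, closed under list contexts. -/
inductive JoinS : PDist A → PDist A → Prop
  | mk (E₁ E₂ : PDist A) (p q : ℝ≥0) (a : A) :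
      JoinS (E₁ ++ [(p,a),(q,a)] ++ E₂) (E₁ ++ [(p+q,a)] ++ E₂)

/-- The Split rule, closed under list contexts. -/
inductive SplitS : PDist A → PDist A → Prop
  | mk (E₁ E₂ : PDist A) (p q : ℝ≥0) (a : A) :
      SplitS (E₁ ++ [(p+q,a)] ++ E₂) (E₁ ++ [(p,a),(q,a)] ++ E₂)

/-- One `∼`-step: congruence closure of Flip, Join and Split. -/
def SimStep (D E : PDist A) : Prop := FlipS D E ∨ JoinS D E ∨ SplitS D E

/-- One Flip-or-Join step. -/
def FJ (D E : PDist A) : Prop := FlipS D E ∨ JoinS D E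

/-- Distribution equivalence `≈`. -/
def DEquiv : PDist A → PDist A → Prop := ReflTransGen SimStep

/-- Parallel evolution `⇒_P` for a PARS relation `R`. -/
inductive PEvol (R : A → PDist A → Prop) : PDist A → PDist A → Prop
  | nil : PEvol R [] []
  | keep {ds ds' : PDist A} (p : ℝ≥0) (a : A) :
      PEvol R ds ds' → PEvol R ((p,a) :: ds) ((p,a) :: ds')
  | evolve {a : A} {D ds ds' : PDist A} (p : ℝ≥0) :
      R a D → PEvol R ds ds' → PEvol R ((p,a) :: ds) (scale p D ++ ds')

/-- Proper parallel evolution `⇒_P¹`: at least one element evolves. -/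
inductive PEvol1 (R : A → PDist A → Prop) : PDist A → PDist A → Prop
  | evolve {a : A} {D ds ds' : PDist A} (p : ℝ≥0) :
      R a D → PEvol R ds ds' → PEvol1 R ((p,a) :: ds) (scale p D ++ ds')
  | keep {ds ds' : PDist A} (p : ℝ≥0) (a : A) :
      PEvol1 R ds ds' → PEvol1 R ((p,a) :: ds) ((p,a) :: ds')

/-- The determinisation relation `↠ = ⇒_P ∪ ≈`. -/
def Red (R : A → PDist A → Prop) (D E : PDist A) : Prop := PEvol R D E ∨ DEquiv D E

/-- `R` defines a PARS: successor distributions are normalised. -/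
def IsPARS (R : A → PDist A → Prop) : Prop := ∀ a D, R a D → weight D = 1

/-- A terminal element has no successor distribution. -/
def Terminal (R : A → PDist A → Prop) (a : A) : Prop := ∀ D, ¬ R a D

/-- A terminal distribution contains only terminal elements. -/
def TerminalD (R : A → PDist A → Prop) (D : PDist A) : Prop := ∀ pa ∈ D, Terminal R pa.2

/-- Classical confluence of a relation. -/
def Confluent (r : X → X → Prop) : Prop :=
  ∀ a b c, ReflTransGen r a b → ReflTransGen r a c →
    ∃ d, ReflTransGen r b d ∧ ReflTransGen r c d

/-- Raw (finite) computation trees. -/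
inductive CTree (A : Type) where
  | leaf (a : A)
  | node (a : A) (cs : List (ℝ≥0 × CTree A))

def CTree.root : CTree A → A
  | .leaf a => a
  | .node a _ => a

/-- `IsTree R t a`: `t` is a computation tree of the PARS `R` with root `a`. -/
inductive IsTree (R : A → PDist A → Prop) : CTree A → A → Prop
  | leaf (a : A) : IsTree R (.leaf a) a
  | node (a : A) (cs : List (ℝ≥0 × CTree A)) :
      R a (cs.map fun x => (x.1, x.2.root)) →
      (∀ x ∈ cs, IsTree R x.2 x.2.root) →
      IsTree R (.node a cs) a

mutual
/-- Support of a computation tree. -/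
def supp : CTree A → PDist A
  | .leaf a => [(1, a)]
  | .node _ cs => suppL cs
def suppL : List (ℝ≥0 × CTree A) → PDist A
  | [] => []
  | (p, t) :: ts => scale p (supp t) ++ suppL ts
end

/-- A tree is maximal when all its leaves are terminal elements. -/
inductive MaximalT (R : A → PDist A → Prop) : CTree A → Prop
  | leaf (a : A) : Terminal R a → MaximalT R (.leaf a)
  | node (a : A) (cs : List (ℝ≥0 × CTree A)) :
      (∀ x ∈ cs, MaximalT R x.2) → MaximalT R (.node a cs)

end PPARS

/-!
Call `M` a splitting of `D` when `M` arises from `D` by replacing every entry `(p, a)` with a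
nonempty block of copies of `a` of total weight `p`. Up to permutation, splittings are a normal
form for `≈`: two equivalent distributions have splittings that are permutations of each other,
because any two blocks of the same entry have a common splitting (cut at the union of their cut
points).

Parallel evolution commutes with splittings in both directions. Forwards, a split block evolves
entry by entry, into a splitting of what the entry evolves into, up to order. Backwards, when the
result `scale p Da` of evolving `(p, a)` is split into blocks `B_y`, one for each entry
`y = (r, c)` of `Da`, the entry `(p, a)` can be split beforehand into a common splitting `C` of
all the blocks `B_y / r`; evolving `C` then yields a further splitting of the split result.
Hence every `↠*`-path standardises to `≈ ; ⇒_P* ; ≈`, and a peak of `⇒_P*`-paths from `D`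
decomposes into Dirac peaks, one for each entry of `D`, which close by hypothesis; scaled and
concatenated, their closing paths close the original peak.
-/

open List (Perm)

lemma reflTransGen_append {α : Type*} {r : List α → List α → Prop}
    (hr : ∀ (L M : List α) {X Y : List α}, r X Y → r (L ++ X ++ M) (L ++ Y ++ M))
    {X Y Z W : List α} (h₁ : ReflTransGen r X Y) (h₂ : ReflTransGen r Z W) :
    ReflTransGen r (X ++ Z) (Y ++ W) :=
  (h₁.lift (· ++ Z) fun _ _ h => by simpa using hr [] Z h).trans
    (h₂.lift (Y ++ ·) fun _ _ h => by simpa using hr Y [] h)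

lemma perm_flatMap_map_comm {β γ δ : Type*} (f : β → γ → δ) (l₁ : List β) (l₂ : List γ) :
    Perm (l₁.flatMap fun b => l₂.map (f b)) (l₂.flatMap fun c => l₁.map (f · c)) := by
  induction l₁ with
  | nil => simp
  | cons b l₁ ih =>
    simp only [List.flatMap_cons, List.map_cons]
    exact (ih.append_left _).trans (List.map_append_flatMap_perm ..)

namespace PPARS

variable {A : Type}

@[simp] lemma scale_nil (α : ℝ≥0) : scale α ([] : PDist A) = [] := rfl

@[simp] lemma scale_cons (α p : ℝ≥0) (a : A) (D : PDist A) :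
    scale α ((p, a) :: D) = (α * p, a) :: scale α D := rfl

@[simp] lemma scale_append (α : ℝ≥0) (D E : PDist A) :
    scale α (D ++ E) = scale α D ++ scale α E := List.map_append

lemma scale_scale (α β : ℝ≥0) (D : PDist A) : scale α (scale β D) = scale (α * β) D := by
  simp [scale, mul_assoc]

@[simp] lemma weight_nil : weight ([] : PDist A) = 0 := rfl

@[simp] lemma weight_cons (p : ℝ≥0) (a : A) (D : PDist A) :
    weight ((p, a) :: D) = p + weight D := rfl

@[simp] lemma weight_append (D E : PDist A) : weight (D ++ E) = weight D + weight E := by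
  simp [weight]

lemma weight_map_mul (r : ℝ≥0) (c : A) (B : PDist A) :
    weight (B.map fun x => (x.1 * r, c)) = weight B * r := by
  simp [weight, Function.comp_def, List.sum_map_mul_right]

structure IsBlock (p : ℝ≥0) (a : A) (B : PDist A) : Prop where
  ne_nil : B ≠ []
  label_eq : ∀ x ∈ B, x.2 = a
  weight_eq : weight B = p

lemma isBlock_singleton_iff {p : ℝ≥0} {a : A} {x : ℝ≥0 × A} : IsBlock p a [x] ↔ x = (p, a) := by
  refine ⟨fun h => Prod.ext (by simpa [weight] using h.weight_eq) (h.label_eq x (by simp)), ?_⟩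
  rintro rfl
  exact ⟨by simp, by simp, by simp⟩

lemma isBlock_cons_iff {p q : ℝ≥0} {a b : A} {B : PDist A} :
    IsBlock p a ((q, b) :: B) ↔ b = a ∧ (∀ x ∈ B, x.2 = a) ∧ q + weight B = p := by
  constructor
  · intro h
    exact ⟨h.label_eq (q, b) (by simp), fun x hx => h.label_eq x (by simp [hx]),
      by simpa using h.weight_eq⟩
  · rintro ⟨rfl, h, hw⟩
    exact ⟨by simp, by simpa using h, by simpa using hw⟩

lemma IsBlock.map_mul {p : ℝ≥0} {a : A} {B : PDist A} (h : IsBlock p a B) (r : ℝ≥0) (c : A) :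
    IsBlock (p * r) c (B.map fun x => (x.1 * r, c)) :=
  ⟨by simpa using h.ne_nil, fun x hx => by obtain ⟨y, -, rfl⟩ := List.mem_map.1 hx; rfl,
    by rw [weight_map_mul, h.weight_eq]⟩

-- `B'` plays the role of `B / r`; for `r = 0` the entries of `B` are all zero and `B'` only
-- has to be as long as `B`.
lemma IsBlock.exists_map_mul_eq {p r : ℝ≥0} {c : A} {B : PDist A} (h : IsBlock (p * r) c B)
    (a : A) : ∃ B', IsBlock p a B' ∧ B'.map (fun x => (x.1 * r, c)) = B := by
  rcases eq_or_ne r 0 with rfl | hr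
  · obtain ⟨x, B, rfl⟩ := List.exists_cons_of_ne_nil h.ne_nil
    have h0 : ∀ y ∈ x :: B, y = (0, c) := fun y hy => Prod.ext
      (List.sum_eq_zero_iff.1 (h.weight_eq.trans (mul_zero p)) _ (List.mem_map_of_mem hy))
      (h.label_eq y hy)
    refine ⟨(p, a) :: B.map fun _ => (0, a), ⟨by simp, by simp, by simp [weight]⟩, ?_⟩
    rw [List.eq_replicate_iff.2 ⟨rfl, h0⟩]
    simp [List.eq_replicate_iff]
  · refine ⟨B.map fun x => (x.1 * r⁻¹, a), ⟨by simpa using h.ne_nil, by simp +contextual, ?_⟩, ?_⟩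
    · rw [weight_map_mul, h.weight_eq, mul_inv_cancel_right₀ hr]
    · rw [List.map_map]
      refine (List.map_congr_left (g := id) fun x hx => ?_).trans (List.map_id _)
      simpa [inv_mul_cancel_right₀ hr] using
        (Prod.ext rfl (h.label_eq x hx).symm : (x.1, c) = x)

inductive SplitsTo : PDist A → PDist A → Prop
  | nil : SplitsTo [] []
  | cons {p : ℝ≥0} {a : A} {D B M : PDist A} :
      IsBlock p a B → SplitsTo D M → SplitsTo ((p, a) :: D) (B ++ M)

lemma SplitsTo.refl : ∀ D : PDist A, SplitsTo D D
  | [] => .nil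
  | _ :: D => .cons (isBlock_singleton_iff.2 rfl) (.refl D)

lemma SplitsTo.append {D₁ M₁ D₂ M₂ : PDist A} (h₁ : SplitsTo D₁ M₁) (h₂ : SplitsTo D₂ M₂) :
    SplitsTo (D₁ ++ D₂) (M₁ ++ M₂) := by
  induction h₁ with
  | nil => exact h₂
  | cons hB _ ih => rw [List.cons_append, List.append_assoc]; exact .cons hB ih

lemma SplitsTo.of_append {D₁ D₂ M : PDist A} (h : SplitsTo (D₁ ++ D₂) M) :
    ∃ M₁ M₂, M = M₁ ++ M₂ ∧ SplitsTo D₁ M₁ ∧ SplitsTo D₂ M₂ := by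
  induction D₁ generalizing M with
  | nil => exact ⟨[], M, rfl, .nil, h⟩
  | cons x D₁ ih =>
    cases h with
    | cons hB h =>
      obtain ⟨M₁, M₂, rfl, h₁, h₂⟩ := ih h
      exact ⟨_ ++ M₁, M₂, (List.append_assoc ..).symm, SplitsTo.cons hB h₁, h₂⟩

lemma splitsTo_singleton_iff {p : ℝ≥0} {a : A} {B : PDist A} :
    SplitsTo [(p, a)] B ↔ IsBlock p a B := by
  refine ⟨fun h => ?_, fun h => by simpa using SplitsTo.cons h .nil⟩
  obtain _ | ⟨hB, h⟩ := h
  cases h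
  simpa using hB

lemma SplitsTo.weight_eq {D M : PDist A} (h : SplitsTo D M) : weight M = weight D := by
  induction h with
  | nil => rfl
  | cons hB _ ih => simp [hB.weight_eq, ih]

lemma SplitsTo.exists_mem_label {D M : PDist A} (h : SplitsTo D M) :
    ∀ y ∈ M, ∃ x ∈ D, y.2 = x.2 := by
  induction h with
  | nil => simp
  | cons hB _ ih =>
    intro y hy
    obtain hy | hy := List.mem_append.1 hy
    · exact ⟨(_, _), List.mem_cons_self, hB.label_eq y hy⟩
    · obtain ⟨x, hx, e⟩ := ih y hy
      exact ⟨x, by simp [hx], e⟩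

lemma SplitsTo.isBlock {p : ℝ≥0} {a : A} {B C : PDist A} (h : SplitsTo B C)
    (hB : IsBlock p a B) : IsBlock p a C := by
  refine ⟨?_, fun y hy => ?_, h.weight_eq.trans hB.weight_eq⟩
  · obtain _ | ⟨hB', _⟩ := h
    · exact hB.ne_nil
    · simp [hB'.ne_nil]
  · obtain ⟨x, hx, e⟩ := h.exists_mem_label y hy
    exact e.trans (hB.label_eq x hx)

lemma SplitsTo.trans {X Y Z : PDist A} (h₁ : SplitsTo X Y) (h₂ : SplitsTo Y Z) :
    SplitsTo X Z := by
  induction h₁ generalizing Z with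
  | nil => exact h₂
  | cons hB _ ih =>
    obtain ⟨Z₁, Z₂, rfl, g₁, g₂⟩ := SplitsTo.of_append h₂
    exact .cons (g₁.isBlock hB) (ih g₂)

lemma SplitsTo.map_mul (r : ℝ≥0) (c : A) {X Y : PDist A} (h : SplitsTo X Y) :
    SplitsTo (X.map fun x => (x.1 * r, c)) (Y.map fun x => (x.1 * r, c)) := by
  induction h with
  | nil => exact .nil
  | cons hB _ ih => rw [List.map_append]; exact .cons (hB.map_mul r c) ih

lemma IsBlock.exists_common_splitsTo {p : ℝ≥0} {a : A} {B₁ B₂ : PDist A}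
    (h₁ : IsBlock p a B₁) (h₂ : IsBlock p a B₂) : ∃ C, SplitsTo B₁ C ∧ SplitsTo B₂ C := by
  induction hn : B₁.length + B₂.length using Nat.strong_induction_on generalizing p B₁ B₂ with
  | _ n ih =>
  obtain ⟨⟨q₁, b₁⟩, B₁, rfl⟩ := List.exists_cons_of_ne_nil h₁.ne_nil
  obtain ⟨⟨q₂, b₂⟩, B₂, rfl⟩ := List.exists_cons_of_ne_nil h₂.ne_nil
  wlog hq : q₁ ≤ q₂ generalizing q₁ b₁ B₁ q₂ b₂ B₂
  · obtain ⟨C, hC₂, hC₁⟩ := this q₂ b₂ B₂ h₂ q₁ b₁ B₁ h₁ (by simp at hn ⊢; omega) (le_of_not_ge hq)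
    exact ⟨C, hC₁, hC₂⟩
  rcases eq_or_ne B₁ [] with rfl | hB₁
  · rw [isBlock_singleton_iff.1 h₁]
    exact ⟨_, splitsTo_singleton_iff.2 h₂, .refl _⟩
  obtain ⟨hb₁, hl₁, hw₁⟩ := isBlock_cons_iff.1 h₁
  obtain ⟨hb₂, hl₂, hw₂⟩ := isBlock_cons_iff.1 h₂
  subst b₁ b₂
  obtain ⟨d, rfl⟩ := le_iff_exists_add.1 hq
  have hrest : IsBlock (weight B₁) a ((d, a) :: B₂) :=
    isBlock_cons_iff.2 ⟨rfl, hl₂, add_left_cancel (a := q₁) (by rw [← add_assoc, hw₂, hw₁])⟩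
  obtain ⟨C, hC₁, hC₂⟩ :=
    ih (B₁.length + (B₂.length + 1)) (by simp at hn ⊢; omega) ⟨hB₁, hl₁, rfl⟩ hrest rfl
  obtain _ | @⟨_, _, _, Bd, M, hD, hC₂⟩ := hC₂
  have hBd : IsBlock (q₁ + d) a ((q₁, a) :: Bd) :=
    isBlock_cons_iff.2 ⟨rfl, hD.label_eq, by rw [hD.weight_eq]⟩
  exact ⟨(q₁, a) :: (Bd ++ M), .cons (isBlock_singleton_iff.2 rfl) hC₁, .cons hBd hC₂⟩

lemma SplitsTo.exists_perm {X Y X' : PDist A} (h : SplitsTo X Y) (hp : Perm X X') :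
    ∃ Y', SplitsTo X' Y' ∧ Perm Y Y' := by
  induction hp generalizing Y with
  | nil => exact ⟨Y, h, .refl Y⟩
  | cons x _ ih =>
    obtain ⟨M₁, M, rfl, h₁, h⟩ := SplitsTo.of_append (D₁ := [x]) h
    obtain ⟨Y', h, hp⟩ := ih h
    exact ⟨M₁ ++ Y', h₁.append h, hp.append_left M₁⟩
  | swap x y _ =>
    obtain ⟨M₁, M, rfl, h₁, h⟩ := SplitsTo.of_append (D₁ := [y]) h
    obtain ⟨M₂, M, rfl, h₂, h⟩ := SplitsTo.of_append (D₁ := [x]) h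
    exact ⟨M₂ ++ (M₁ ++ M), h₂.append (h₁.append h), List.perm_append_comm_assoc ..⟩
  | trans _ _ ih₁ ih₂ =>
    obtain ⟨Y₁, hY₁, hp₁⟩ := ih₁ h
    obtain ⟨Y₂, hY₂, hp₂⟩ := ih₂ hY₁
    exact ⟨Y₂, hY₂, hp₁.trans hp₂⟩

lemma SplitsTo.exists_common {D M₁ M₂ : PDist A} (h₁ : SplitsTo D M₁) (h₂ : SplitsTo D M₂) :
    ∃ N, SplitsTo M₁ N ∧ SplitsTo M₂ N := by
  induction h₁ generalizing M₂ with
  | nil => cases h₂; exact ⟨[], .nil, .nil⟩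
  | cons hB _ ih =>
    obtain _ | ⟨hB₂, h₂⟩ := h₂
    obtain ⟨C, hC₁, hC₂⟩ := hB.exists_common_splitsTo hB₂
    obtain ⟨N, hN₁, hN₂⟩ := ih h₂
    exact ⟨C ++ N, hC₁.append hN₁, hC₂.append hN₂⟩

def SplitsPerm (D E : PDist A) : Prop := ∃ M, SplitsTo D M ∧ Perm M E

namespace SplitsPerm

lemma refl (D : PDist A) : SplitsPerm D D := ⟨D, .refl D, .refl D⟩

lemma of_splitsTo {D E : PDist A} (h : SplitsTo D E) : SplitsPerm D E := ⟨E, h, .refl E⟩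

lemma of_perm {D E : PDist A} (h : Perm D E) : SplitsPerm D E := ⟨D, .refl D, h⟩

lemma trans {X Y Z : PDist A} (h₁ : SplitsPerm X Y) (h₂ : SplitsPerm Y Z) : SplitsPerm X Z := by
  obtain ⟨M₁, s₁, p₁⟩ := h₁
  obtain ⟨M₂, s₂, p₂⟩ := h₂
  obtain ⟨M₃, s₃, p₃⟩ := s₂.exists_perm p₁.symm
  exact ⟨M₃, s₁.trans s₃, p₃.symm.trans p₂⟩

lemma append {D₁ E₁ D₂ E₂ : PDist A} (h₁ : SplitsPerm D₁ E₁) (h₂ : SplitsPerm D₂ E₂) :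
    SplitsPerm (D₁ ++ D₂) (E₁ ++ E₂) := by
  obtain ⟨M₁, s₁, p₁⟩ := h₁
  obtain ⟨M₂, s₂, p₂⟩ := h₂
  exact ⟨M₁ ++ M₂, s₁.append s₂, p₁.append p₂⟩

lemma exists_common {D E₁ E₂ : PDist A} (h₁ : SplitsPerm D E₁) (h₂ : SplitsPerm D E₂) :
    ∃ C, SplitsPerm E₁ C ∧ SplitsPerm E₂ C := by
  obtain ⟨M₁, s₁, p₁⟩ := h₁
  obtain ⟨M₂, s₂, p₂⟩ := h₂
  obtain ⟨N, t₁, t₂⟩ := s₁.exists_common s₂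
  exact ⟨N, (of_perm p₁.symm).trans (of_splitsTo t₁), (of_perm p₂.symm).trans (of_splitsTo t₂)⟩

end SplitsPerm

lemma SimStep.symm {X Y : PDist A} (h : SimStep X Y) : SimStep Y X := by
  rcases h with ⟨E₁, E₂, p, q, a, b⟩ | ⟨E₁, E₂, p, q, a⟩ | ⟨E₁, E₂, p, q, a⟩
  · exact Or.inl (FlipS.mk E₁ E₂ q p b a)
  · exact Or.inr (Or.inr (SplitS.mk E₁ E₂ p q a))
  · exact Or.inr (Or.inl (JoinS.mk E₁ E₂ p q a))

lemma SimStep.context {X Y : PDist A} (L M : PDist A) (h : SimStep X Y) :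
    SimStep (L ++ X ++ M) (L ++ Y ++ M) := by
  rcases h with ⟨E₁, E₂, p, q, a, b⟩ | ⟨E₁, E₂, p, q, a⟩ | ⟨E₁, E₂, p, q, a⟩
  · exact Or.inl (by simpa using FlipS.mk (L ++ E₁) (E₂ ++ M) p q a b)
  · exact Or.inr (Or.inl (by simpa using JoinS.mk (L ++ E₁) (E₂ ++ M) p q a))
  · exact Or.inr (Or.inr (by simpa using SplitS.mk (L ++ E₁) (E₂ ++ M) p q a))

lemma SimStep.scale {X Y : PDist A} (α : ℝ≥0) (h : SimStep X Y) :
    SimStep (scale α X) (scale α Y) := by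
  rcases h with ⟨E₁, E₂, p, q, a, b⟩ | ⟨E₁, E₂, p, q, a⟩ | ⟨E₁, E₂, p, q, a⟩
  · have := FlipS.mk (PPARS.scale α E₁) (PPARS.scale α E₂) (α * p) (α * q) a b
    exact Or.inl (by simpa using this)
  · have := JoinS.mk (PPARS.scale α E₁) (PPARS.scale α E₂) (α * p) (α * q) a
    exact Or.inr (Or.inl (by simpa [mul_add] using this))
  · have := SplitS.mk (PPARS.scale α E₁) (PPARS.scale α E₂) (α * p) (α * q) a
    exact Or.inr (Or.inr (by simpa [mul_add] using this))

namespace DEquiv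

lemma symm {X Y : PDist A} (h : DEquiv X Y) : DEquiv Y X := by
  induction h with
  | refl => exact .refl
  | tail _ hs ih => exact .head hs.symm ih

lemma append {X Y Z W : PDist A} (h₁ : DEquiv X Y) (h₂ : DEquiv Z W) : DEquiv (X ++ Z) (Y ++ W) :=
  reflTransGen_append (fun L M _ _ h => h.context L M) h₁ h₂

lemma scale {X Y : PDist A} (α : ℝ≥0) (h : DEquiv X Y) : DEquiv (scale α X) (scale α Y) :=
  h.lift _ fun _ _ h => h.scale α

lemma of_perm {X Y : PDist A} (h : Perm X Y) : DEquiv X Y := by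
  induction h with
  | nil => exact .refl
  | cons x _ ih => exact append (.refl (a := [x])) ih
  | swap x y l => exact .single (Or.inl (by simpa using FlipS.mk [] l y.1 x.1 y.2 x.2))
  | trans _ _ ih₁ ih₂ => exact ih₁.trans ih₂

lemma of_isBlock {p : ℝ≥0} {a : A} {B : PDist A} (h : IsBlock p a B) : DEquiv [(p, a)] B := by
  induction B generalizing p with
  | nil => exact absurd rfl h.ne_nil
  | cons x B ih =>
    rcases eq_or_ne B [] with rfl | hB
    · rw [isBlock_singleton_iff.1 h]; exact .refl
    obtain ⟨q, b⟩ := x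
    obtain ⟨rfl, hl, rfl⟩ := isBlock_cons_iff.1 h
    have split : SimStep [(q + weight B, b)] [(q, b), (weight B, b)] :=
      Or.inr (Or.inr (by simpa using SplitS.mk [] [] q (weight B) b))
    exact .head split (append (.refl (a := [(q, b)])) (ih ⟨hB, hl, rfl⟩))

lemma of_splitsTo {X Y : PDist A} (h : SplitsTo X Y) : DEquiv X Y := by
  induction h with
  | nil => exact .refl
  | cons hB _ ih => exact append (of_isBlock hB) ih

lemma exists_common_splitsPerm {D E : PDist A} (h : DEquiv D E) :
    ∃ C, SplitsPerm D C ∧ SplitsPerm E C := by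
  induction h with
  | refl => exact ⟨D, .refl D, .refl D⟩
  | tail _ hstep ih =>
    obtain ⟨C, hD, hX⟩ := ih
    have split (E₁ E₂ : PDist A) (p q : ℝ≥0) (a : A) :
        SplitsPerm (E₁ ++ [(p + q, a)] ++ E₂) (E₁ ++ [(p, a), (q, a)] ++ E₂) :=
      .of_splitsTo <| ((SplitsTo.refl E₁).append (splitsTo_singleton_iff.2
        (isBlock_cons_iff.2 ⟨rfl, by simp, by simp⟩))).append (.refl E₂)
    rcases hstep with ⟨E₁, E₂, p, q, a, b⟩ | ⟨E₁, E₂, p, q, a⟩ | ⟨E₁, E₂, p, q, a⟩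
    · refine ⟨C, hD, .trans (.of_perm ?_) hX⟩
      simpa using (List.Perm.swap (p, a) (q, b) E₂).append_left E₁
    · exact ⟨C, hD, (split E₁ E₂ p q a).trans hX⟩
    · obtain ⟨C', hC, hY⟩ := hX.exists_common (split E₁ E₂ p q a)
      exact ⟨C', hD.trans hC, hY⟩

end DEquiv

lemma SplitsPerm.dequiv {X Y : PDist A} (h : SplitsPerm X Y) : DEquiv X Y :=
  let ⟨_, s, p⟩ := h
  (DEquiv.of_splitsTo s).trans (DEquiv.of_perm p)

variable {R : A → PDist A → Prop}

namespace PEvol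

lemma refl : ∀ D : PDist A, PEvol R D D
  | [] => nil
  | (p, a) :: D => keep p a (refl D)

lemma append {D₁ E₁ D₂ E₂ : PDist A} (h₁ : PEvol R D₁ E₁) (h₂ : PEvol R D₂ E₂) :
    PEvol R (D₁ ++ D₂) (E₁ ++ E₂) := by
  induction h₁ with
  | nil => exact h₂
  | keep p a _ ih => exact keep p a ih
  | evolve p hr _ ih => rw [List.append_assoc]; exact evolve p hr ih

lemma of_append {D₁ D₂ E : PDist A} (h : PEvol R (D₁ ++ D₂) E) :
    ∃ E₁ E₂, E = E₁ ++ E₂ ∧ PEvol R D₁ E₁ ∧ PEvol R D₂ E₂ := by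
  induction D₁ generalizing E with
  | nil => exact ⟨[], E, rfl, nil, h⟩
  | cons x D₁ ih =>
    cases h with
    | keep p a h =>
      obtain ⟨E₁, E₂, rfl, h₁, h₂⟩ := ih h
      exact ⟨(p, a) :: E₁, E₂, rfl, keep p a h₁, h₂⟩
    | evolve p hr h =>
      obtain ⟨E₁, E₂, rfl, h₁, h₂⟩ := ih h
      exact ⟨_ ++ E₁, E₂, (List.append_assoc ..).symm, evolve p hr h₁, h₂⟩

lemma scale {D E : PDist A} (α : ℝ≥0) (h : PEvol R D E) :
    PEvol R (PPARS.scale α D) (PPARS.scale α E) := by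
  induction h with
  | nil => exact nil
  | keep p a _ ih => exact keep _ a ih
  | evolve p hr _ ih => rw [scale_cons, scale_append, scale_scale]; exact evolve _ hr ih

lemma of_scale {D F : PDist A} (α : ℝ≥0) (h : PEvol R (PPARS.scale α D) F) :
    ∃ E, F = PPARS.scale α E ∧ PEvol R D E := by
  induction D generalizing F with
  | nil => cases h; exact ⟨[], rfl, nil⟩
  | cons x D ih =>
    cases h with
    | keep _ _ h =>
      obtain ⟨E, rfl, hE⟩ := ih h
      exact ⟨x :: E, rfl, keep x.1 x.2 hE⟩
    | evolve _ hr h =>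
      obtain ⟨E, rfl, hE⟩ := ih h
      exact ⟨_ ++ E, by rw [scale_append, scale_scale], evolve x.1 hr hE⟩

lemma star_eq_nil {E : PDist A} (h : ReflTransGen (PEvol R) [] E) : E = [] := by
  induction h with
  | refl => rfl
  | tail _ h ih => subst ih; cases h; rfl

lemma star_of_append {D₁ D₂ E : PDist A} (h : ReflTransGen (PEvol R) (D₁ ++ D₂) E) :
    ∃ E₁ E₂, E = E₁ ++ E₂ ∧ ReflTransGen (PEvol R) D₁ E₁ ∧ ReflTransGen (PEvol R) D₂ E₂ := by
  induction h with
  | refl => exact ⟨D₁, D₂, rfl, .refl, .refl⟩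
  | tail _ h ih =>
    obtain ⟨E₁, E₂, rfl, h₁, h₂⟩ := ih
    obtain ⟨F₁, F₂, rfl, g₁, g₂⟩ := of_append h
    exact ⟨F₁, F₂, rfl, h₁.tail g₁, h₂.tail g₂⟩

lemma star_of_scale {D F : PDist A} (α : ℝ≥0) (h : ReflTransGen (PEvol R) (PPARS.scale α D) F) :
    ∃ E, F = PPARS.scale α E ∧ ReflTransGen (PEvol R) D E := by
  induction h with
  | refl => exact ⟨D, rfl, .refl⟩
  | tail _ h ih =>
    obtain ⟨E, rfl, hE⟩ := ih
    obtain ⟨F, rfl, hF⟩ := of_scale α h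
    exact ⟨F, rfl, hE.tail hF⟩

lemma of_block {a : A} {Da : PDist A} (hr : R a Da) :
    ∀ {B : PDist A}, (∀ x ∈ B, x.2 = a) → PEvol R B (B.flatMap fun x => PPARS.scale x.1 Da)
  | [], _ => nil
  | (p, b) :: B, hB => by
    obtain rfl : b = a := hB _ List.mem_cons_self
    exact evolve p hr (of_block hr fun x hx => hB x (List.mem_cons_of_mem _ hx))

lemma exists_of_perm {D C X : PDist A} (hp : Perm D C) (h : PEvol R D X) :
    ∃ X', PEvol R C X' ∧ Perm X X' := by
  induction hp generalizing X with
  | nil => exact ⟨X, h, .refl X⟩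
  | cons x _ ih =>
    obtain ⟨X₁, X₂, rfl, h₁, h₂⟩ := of_append (D₁ := [x]) h
    obtain ⟨X₂', h₂', hp⟩ := ih h₂
    exact ⟨X₁ ++ X₂', h₁.append h₂', hp.append_left X₁⟩
  | swap x y _ =>
    obtain ⟨X₁, X, rfl, h₁, h⟩ := of_append (D₁ := [y]) h
    obtain ⟨X₂, X, rfl, h₂, h⟩ := of_append (D₁ := [x]) h
    exact ⟨X₂ ++ (X₁ ++ X), h₂.append (h₁.append h), List.perm_append_comm_assoc ..⟩
  | trans _ _ ih₁ ih₂ =>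
    obtain ⟨X₁, h₁, hp₁⟩ := ih₁ h
    obtain ⟨X₂, h₂, hp₂⟩ := ih₂ h₁
    exact ⟨X₂, h₂, hp₁.trans hp₂⟩

end PEvol

lemma splitsTo_scale_flatMap {p : ℝ≥0} {a : A} {C : PDist A} (hC : IsBlock p a C) (Da : PDist A) :
    SplitsTo (scale p Da) (Da.flatMap fun y => C.map fun x => (x.1 * y.1, y.2)) := by
  induction Da with
  | nil => exact .nil
  | cons y Da ih => exact .cons (hC.map_mul y.1 y.2) ih

lemma perm_flatMap_scale (C Da : PDist A) :
    Perm (Da.flatMap fun y => C.map fun x => (x.1 * y.1, y.2)) (C.flatMap fun x => scale x.1 Da) :=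
  perm_flatMap_map_comm (fun y x => (x.1 * y.1, y.2)) Da C

lemma SplitsTo.exists_pevol {D C X : PDist A} (hs : SplitsTo D C) (h : PEvol R D X) :
    ∃ X', PEvol R C X' ∧ SplitsPerm X X' := by
  induction hs generalizing X with
  | nil => exact ⟨X, h, .refl X⟩
  | cons hB _ ih =>
    cases h with
    | keep p a h =>
      obtain ⟨X', h', hX⟩ := ih h
      exact ⟨_ ++ X', (PEvol.refl _).append h',
        (SplitsPerm.of_splitsTo (splitsTo_singleton_iff.2 hB)).append hX⟩
    | evolve p hr h =>
      obtain ⟨X', h', hX⟩ := ih h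
      refine ⟨_ ++ X', (PEvol.of_block hr hB.label_eq).append h', .append ?_ hX⟩
      exact .trans (.of_splitsTo (splitsTo_scale_flatMap hB _)) (.of_perm (perm_flatMap_scale _ _))

lemma SplitsPerm.exists_pevol {D C X : PDist A} (hs : SplitsPerm D C) (h : PEvol R D X) :
    ∃ X', PEvol R C X' ∧ SplitsPerm X X' := by
  obtain ⟨M, hs, hp⟩ := hs
  obtain ⟨X₁, h₁, hX₁⟩ := hs.exists_pevol h
  obtain ⟨X₂, h₂, hX₂⟩ := PEvol.exists_of_perm hp h₁
  exact ⟨X₂, h₂, hX₁.trans (.of_perm hX₂)⟩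

lemma SplitsPerm.exists_pevol_star {D C E : PDist A} (hs : SplitsPerm D C)
    (h : ReflTransGen (PEvol R) D E) : ∃ E', ReflTransGen (PEvol R) C E' ∧ SplitsPerm E E' := by
  induction h with
  | refl => exact ⟨C, .refl, hs⟩
  | tail _ h ih =>
    obtain ⟨X, hX, hsX⟩ := ih
    obtain ⟨E', h', hsE'⟩ := hsX.exists_pevol h
    exact ⟨E', hX.tail h', hsE'⟩

lemma exists_splitsTo_of_splitsTo_scale {p : ℝ≥0} {a : A} (Da : PDist A) {M C₀ : PDist A}
    (hM : SplitsTo (scale p Da) M) (hC₀ : IsBlock p a C₀) :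
    ∃ C, SplitsTo C₀ C ∧ SplitsTo M (Da.flatMap fun y => C.map fun x => (x.1 * y.1, y.2)) := by
  induction Da generalizing M C₀ with
  | nil => cases hM; exact ⟨C₀, .refl C₀, .nil⟩
  | cons y Da ih =>
    obtain _ | ⟨hB, hM⟩ := hM
    obtain ⟨B', hB', rfl⟩ := hB.exists_map_mul_eq a
    obtain ⟨C₁, hC₀₁, hB'₁⟩ := hC₀.exists_common_splitsTo hB'
    obtain ⟨C, hC₁, hM⟩ := ih hM (hC₀₁.isBlock hC₀)
    exact ⟨C, hC₀₁.trans hC₁, ((hB'₁.trans hC₁).map_mul y.1 y.2).append hM⟩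

lemma PEvol.exists_of_splitsTo {D X M : PDist A} (h : PEvol R D X) (hs : SplitsTo X M) :
    ∃ D' M', SplitsTo D D' ∧ PEvol R D' M' ∧ SplitsPerm M M' := by
  induction h generalizing M with
  | nil => exact ⟨[], M, .refl [], by cases hs; exact .nil, .refl M⟩
  | keep p a _ ih =>
    obtain _ | ⟨hB, hs⟩ := hs
    obtain ⟨D', M', hD, h, hM⟩ := ih hs
    exact ⟨_ ++ D', _ ++ M', .cons hB hD, (PEvol.refl _).append h, (SplitsPerm.refl _).append hM⟩
  | evolve p hr _ ih =>
    obtain ⟨M₁, M₂, rfl, hs₁, hs₂⟩ := SplitsTo.of_append hs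
    obtain ⟨D', M', hD, h, hM⟩ := ih hs₂
    obtain ⟨C, hC, hM₁⟩ := exists_splitsTo_of_splitsTo_scale _ hs₁ (isBlock_singleton_iff.2 rfl)
    have hC : IsBlock p _ C := hC.isBlock (isBlock_singleton_iff.2 rfl)
    exact ⟨C ++ D', _ ++ M', .cons hC hD, (PEvol.of_block hr hC.label_eq).append h,
      ((SplitsPerm.of_splitsTo hM₁).trans (.of_perm (perm_flatMap_scale _ _))).append hM⟩

lemma PEvol.exists_of_splitsPerm {D X W : PDist A} (h : PEvol R D X) (hs : SplitsPerm X W) :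
    ∃ D' W', SplitsTo D D' ∧ PEvol R D' W' ∧ SplitsPerm W W' := by
  obtain ⟨M, hs, hp⟩ := hs
  obtain ⟨D', M', hD, h, hM⟩ := h.exists_of_splitsTo hs
  exact ⟨D', M', hD, h, (SplitsPerm.of_perm hp.symm).trans hM⟩

lemma Red.context {X Y : PDist A} (L M : PDist A) (h : Red R X Y) :
    Red R (L ++ X ++ M) (L ++ Y ++ M) :=
  h.imp (fun h => ((PEvol.refl L).append h).append (PEvol.refl M))
    (fun h => (DEquiv.append .refl h).append .refl)

lemma Red.scale {X Y : PDist A} (α : ℝ≥0) (h : Red R X Y) : Red R (scale α X) (scale α Y) :=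
  h.imp (PEvol.scale α) (DEquiv.scale α)

lemma exists_dequiv_pevol_star_dequiv {D E : PDist A} (h : ReflTransGen (Red R) D E) :
    ∃ D' E', DEquiv D D' ∧ ReflTransGen (PEvol R) D' E' ∧ DEquiv E' E := by
  induction h using ReflTransGen.head_induction_on with
  | refl => exact ⟨E, E, .refl, .refl, .refl⟩
  | head hstep _ ih =>
    obtain ⟨X₁, E₁, hX, hev, hE⟩ := ih
    rcases hstep with hstep | hstep
    · obtain ⟨C, hXC, hX₁C⟩ := hX.exists_common_splitsPerm
      obtain ⟨E₂, hev₂, hE₂⟩ := hX₁C.exists_pevol_star hev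
      obtain ⟨D', C', hD', hstep', hC'⟩ := hstep.exists_of_splitsPerm hXC
      obtain ⟨E₃, hev₃, hE₃⟩ := hC'.exists_pevol_star hev₂
      exact ⟨D', E₃, .of_splitsTo hD', .head hstep' hev₃, (hE₂.trans hE₃).dequiv.symm.trans hE⟩
    · exact ⟨X₁, E₁, hstep.trans hX, hev, hE⟩

lemma joinable_of_pevol_star_peak
    (hDirac : ∀ (a : A) (E F : PDist A),
      ReflTransGen (PEvol R) [(1, a)] E → ReflTransGen (PEvol R) [(1, a)] F →
      ∃ C, ReflTransGen (Red R) E C ∧ ReflTransGen (Red R) F C)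
    {D E F : PDist A} (hE : ReflTransGen (PEvol R) D E) (hF : ReflTransGen (PEvol R) D F) :
    ∃ C, ReflTransGen (Red R) E C ∧ ReflTransGen (Red R) F C := by
  induction D generalizing E F with
  | nil => rw [PEvol.star_eq_nil hE, PEvol.star_eq_nil hF]; exact ⟨[], .refl, .refl⟩
  | cons x D ih =>
    have hx : [x] = scale x.1 [(1, x.2)] := by simp
    obtain ⟨E₁, E₂, rfl, hE₁, hE₂⟩ := PEvol.star_of_append (D₁ := [x]) hE
    obtain ⟨F₁, F₂, rfl, hF₁, hF₂⟩ := PEvol.star_of_append (D₁ := [x]) hF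
    obtain ⟨E₀, rfl, hE₀⟩ := PEvol.star_of_scale x.1 (hx ▸ hE₁)
    obtain ⟨F₀, rfl, hF₀⟩ := PEvol.star_of_scale x.1 (hx ▸ hF₁)
    obtain ⟨C₁, hEC₁, hFC₁⟩ := hDirac x.2 E₀ F₀ hE₀ hF₀
    obtain ⟨C₂, hEC₂, hFC₂⟩ := ih hE₂ hF₂
    have close {X Y Z W : PDist A} (h₁ : ReflTransGen (Red R) X Y)
        (h₂ : ReflTransGen (Red R) Z W) :
        ReflTransGen (Red R) (scale x.1 X ++ Z) (scale x.1 Y ++ W) :=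
      reflTransGen_append (fun L M _ _ h => h.context L M) (h₁.lift _ fun _ _ h => h.scale x.1) h₂
    exact ⟨scale x.1 C₁ ++ C₂, close hEC₁ hEC₂, close hFC₁ hFC₂⟩

end PPARS

open PPARS Relation in
/-- Dirac confluence criterion: closing all purely-`⇒_P*` peaks from Dirac
distributions implies distribution confluence. -/
theorem dirac_confluence {A : Type} (R : A → PDist A → Prop) (hR : IsPARS R)
    (h : ∀ (a : A) (E F : PDist A),
      ReflTransGen (PEvol R) [(1, a)] E → ReflTransGen (PEvol R) [(1, a)] F →
      ∃ C, ReflTransGen (Red R) E C ∧ ReflTransGen (Red R) F C) :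
    Confluent (Red R) := by
  intro D E F hE hF
  obtain ⟨D₁, E₁, hD₁, hE₁, hE₁E⟩ := exists_dequiv_pevol_star_dequiv hE
  obtain ⟨D₂, F₁, hD₂, hF₁, hF₁F⟩ := exists_dequiv_pevol_star_dequiv hF
  obtain ⟨C, hC₁, hC₂⟩ := DEquiv.exists_common_splitsPerm (hD₁.symm.trans hD₂)
  obtain ⟨E₂, hE₂, hE₁E₂⟩ := hC₁.exists_pevol_star hE₁
  obtain ⟨F₂, hF₂, hF₁F₂⟩ := hC₂.exists_pevol_star hF₁
  obtain ⟨W, hE₂W, hF₂W⟩ := joinable_of_pevol_star_peak h hE₂ hF₂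
  exact ⟨W, .head (Or.inr (hE₁E.symm.trans hE₁E₂.dequiv)) hE₂W,
    .head (Or.inr (hF₁F.symm.trans hF₁F₂.dequiv)) hF₂W⟩
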